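/- (Theorem 4: almost sure convergence of the posterior probability of H₀.) Let W_1, W_2, … be independent integrable real random variables with finite variances such that there exists ε > 0 with E[W_m] ≤ −ε for all m, and Σ_{m=1}^∞ Var(W_m)/m² < ∞. Let κ₀ ∈ (0,1) and for each M define the posterior probability κ_{0M} = [1 + ((1−κ₀)/κ₀)·exp(Σ_{m=1}^{M} W_m)]^{−1}. Then κ_{0M} → 1 almost surely as M → ∞. -/

import Mathlib

/-! Centre the log-likelihood ratios: by Kolmogorov's one-series theorem (the partial sums of
`(W_m - E W_m)/(m+1)` form an L²-bounded martingale, hence converge a.s.) and Kronecker's lemma,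
`(1/M) Σ_{m<M} (W_m - E W_m) → 0` almost surely. Since `E W_m ≤ -ε`, the partial sums
`Σ_{m<M} W_m` are eventually below `-εM/2`, so `exp (Σ_{m<M} W_m) → 0` and `κ_{0M} → 1`. -/

open MeasureTheory ProbabilityTheory Filter Finset Topology

theorem Filter.Tendsto.kronecker {a : ℕ → ℝ} {L : ℝ}
    (h : Tendsto (fun n => ∑ m ∈ range n, ((m : ℝ) + 1)⁻¹ * a m) atTop (𝓝 L)) :
    Tendsto (fun n : ℕ => (n : ℝ)⁻¹ * ∑ m ∈ range n, a m) atTop (𝓝 0) := by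
  set B : ℕ → ℝ := fun n => ∑ m ∈ range n, ((m : ℝ) + 1)⁻¹ * a m
  have summation_by_parts : ∀ n, ∑ m ∈ range n, a m = n * B n - ∑ m ∈ range n, B m := by
    intro n
    induction n with
    | zero => simp [B]
    | succ n ih =>
      have hB : B (n + 1) = B n + ((n : ℝ) + 1)⁻¹ * a n := sum_range_succ _ _
      rw [sum_range_succ, ih, sum_range_succ B, hB]
      push_cast
      field_simp
      ring
  have hB : Tendsto (fun n : ℕ => B n - (n : ℝ)⁻¹ * ∑ m ∈ range n, B m) atTop (𝓝 0) := by
    simpa using h.sub h.cesaro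
  refine hB.congr' ?_
  filter_upwards [eventually_ne_atTop 0] with n hn
  rw [summation_by_parts, mul_sub, ← mul_assoc, inv_mul_cancel₀ (Nat.cast_ne_zero.2 hn), one_mul]

lemma tendsto_sum_atBot_of_tendsto_inv_mul_sum_sub {x c : ℕ → ℝ} {ε : ℝ} (hε : 0 < ε)
    (hc : ∀ m, c m ≤ -ε)
    (h : Tendsto (fun n : ℕ => (n : ℝ)⁻¹ * ∑ m ∈ range n, (x m - c m)) atTop (𝓝 0)) :
    Tendsto (fun n => ∑ m ∈ range n, x m) atTop atBot := by
  have hlin : Tendsto (fun n : ℕ => -(ε / 2) * n) atTop atBot :=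
    tendsto_natCast_atTop_atTop.const_mul_atTop_of_neg (by linarith)
  refine tendsto_atBot_mono' _ ?_ hlin
  filter_upwards [h.eventually_lt_const (half_pos hε), eventually_gt_atTop 0] with n hdev hn
  have hdev' : ∑ m ∈ range n, (x m - c m) < ε / 2 * n := by
    rwa [inv_mul_lt_iff₀ (Nat.cast_pos.2 hn), mul_comm] at hdev
  have hmean : ∑ m ∈ range n, c m ≤ -ε * n := by
    simpa [mul_comm] using sum_le_sum fun m (_ : m ∈ range n) => hc m
  rw [sum_sub_distrib] at hdev'
  linarith

lemma tendsto_inv_one_add_mul_exp_of_tendsto_atBot {α : Type*} {l : Filter α} {S : α → ℝ}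
    (a : ℝ) (hS : Tendsto S l atBot) :
    Tendsto (fun n => (1 + a * Real.exp (S n))⁻¹) l (𝓝 1) := by
  have := ((Real.tendsto_exp_atBot.comp hS).const_mul a).const_add 1
  simpa using this.inv₀ (by norm_num)

namespace ProbabilityTheory

variable {Ω : Type*} [MeasurableSpace Ω] {μ : Measure Ω}

lemma eLpNorm_one_le_sqrt_variance [IsProbabilityMeasure μ] {f : Ω → ℝ} (hf : MemLp f 2 μ)
    (hmean : μ[f] = 0) : eLpNorm f 1 μ ≤ ENNReal.ofReal √(variance f μ) := by
  calc eLpNorm f 1 μ ≤ eLpNorm f 2 μ := eLpNorm_le_eLpNorm_of_exponent_le one_le_two hf.1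
    _ = ENNReal.ofReal √(variance f μ) := by
      rw [hf.eLpNorm_eq_integral_rpow_norm two_ne_zero ENNReal.ofNat_ne_top,
        variance_of_integral_eq_zero hf.aemeasurable hmean, Real.sqrt_eq_rpow]
      norm_num

variable {Y : ℕ → Ω → ℝ}

lemma iIndepFun.martingale_sum_range_succ (hY : ∀ m, StronglyMeasurable (Y m))
    (hindep : iIndepFun Y μ) (hint : ∀ m, Integrable (Y m) μ) (hmean : ∀ m, μ[Y m] = 0) :
    Martingale (fun n => ∑ m ∈ range (n + 1), Y m) (Filtration.natural Y hY) μ := by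
  have := hindep.isProbabilityMeasure
  refine martingale_of_condExp_sub_eq_zero_nat (fun n => ?_)
    (fun n => integrable_finsetSum' _ fun m _ => hint m) (fun n => ?_)
  · refine Finset.stronglyMeasurable_sum _ fun m hm => ?_
    exact (Filtration.stronglyAdapted_natural hY m).mono
      ((Filtration.natural Y hY).mono (Nat.lt_succ_iff.1 (mem_range.1 hm)))
  · rw [sum_range_succ _ (n + 1), add_sub_cancel_left]
    filter_upwards [hindep.condExp_natural_ae_eq_of_lt hY (Nat.lt_succ_self n)] with ω hω
    rw [hω, hmean, Pi.zero_apply]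

lemma iIndepFun.variance_sum_le_tsum (hindep : iIndepFun Y μ) (hL2 : ∀ m, MemLp (Y m) 2 μ)
    (hvar : Summable fun m => variance (Y m) μ) (s : Finset ℕ) :
    variance (∑ m ∈ s, Y m) μ ≤ ∑' m, variance (Y m) μ := by
  rw [IndepFun.variance_sum (fun m _ => hL2 m) fun i _ j _ hij => hindep.indepFun hij]
  exact hvar.sum_le_tsum _ fun m _ => variance_nonneg _ _

lemma ae_exists_tendsto_sum_of_summable_variance_of_stronglyMeasurable
    (hY : ∀ m, StronglyMeasurable (Y m)) (hindep : iIndepFun Y μ)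
    (hL2 : ∀ m, MemLp (Y m) 2 μ) (hmean : ∀ m, μ[Y m] = 0)
    (hvar : Summable fun m => variance (Y m) μ) :
    ∀ᵐ ω ∂μ, ∃ c, Tendsto (fun n => ∑ m ∈ range n, Y m ω) atTop (𝓝 c) := by
  have := hindep.isProbabilityMeasure
  have hmart := hindep.martingale_sum_range_succ hY (fun m => (hL2 m).integrable one_le_two) hmean
  have hbdd (n : ℕ) :
      eLpNorm (∑ m ∈ range (n + 1), Y m) 1 μ ≤ (√(∑' m, variance (Y m) μ)).toNNReal := by
    have hsum_mean : μ[∑ m ∈ range (n + 1), Y m] = 0 := by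
      simp only [Finset.sum_apply]
      rw [integral_finsetSum _ fun m _ => (hL2 m).integrable one_le_two]
      exact sum_eq_zero fun m _ => hmean m
    calc eLpNorm (∑ m ∈ range (n + 1), Y m) 1 μ
        ≤ ENNReal.ofReal √(variance (∑ m ∈ range (n + 1), Y m) μ) :=
          eLpNorm_one_le_sqrt_variance (memLp_finsetSum' _ fun m _ => hL2 m) hsum_mean
      _ ≤ ENNReal.ofReal √(∑' m, variance (Y m) μ) :=
          ENNReal.ofReal_le_ofReal (Real.sqrt_le_sqrt (hindep.variance_sum_le_tsum hL2 hvar _))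
  filter_upwards [hmart.submartingale.exists_ae_tendsto_of_bdd hbdd] with ω ⟨c, hc⟩
  refine ⟨c, (tendsto_add_atTop_iff_nat 1).1 ?_⟩
  simpa only [Finset.sum_apply] using hc

theorem ae_exists_tendsto_sum_of_summable_variance (hindep : iIndepFun Y μ)
    (hL2 : ∀ m, MemLp (Y m) 2 μ) (hmean : ∀ m, μ[Y m] = 0)
    (hvar : Summable fun m => variance (Y m) μ) :
    ∀ᵐ ω ∂μ, ∃ c, Tendsto (fun n => ∑ m ∈ range n, Y m ω) atTop (𝓝 c) := by
  set Y' : ℕ → Ω → ℝ := fun m => (hL2 m).1.mk (Y m)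
  have hYY' (m : ℕ) : Y m =ᵐ[μ] Y' m := (hL2 m).1.ae_eq_mk
  have hY' := ae_exists_tendsto_sum_of_summable_variance_of_stronglyMeasurable
    (fun m => (hL2 m).1.stronglyMeasurable_mk) (hindep.congr hYY')
    (fun m => (hL2 m).ae_eq (hYY' m))
    (fun m => (integral_congr_ae (hYY' m)).symm.trans (hmean m))
    (hvar.congr fun m => variance_congr (hYY' m))
  filter_upwards [hY', ae_all_iff.2 hYY'] with ω ⟨c, hc⟩ hω
  exact ⟨c, by simpa only [hω] using hc⟩

theorem ae_tendsto_inv_mul_sum_sub_integral {W : ℕ → Ω → ℝ} (hindep : iIndepFun W μ)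
    (hL2 : ∀ m, MemLp (W m) 2 μ)
    (hvar : Summable fun m : ℕ => variance (W m) μ / ((m : ℝ) + 1) ^ 2) :
    ∀ᵐ ω ∂μ, Tendsto (fun n : ℕ => (n : ℝ)⁻¹ * ∑ m ∈ range n, (W m ω - μ[W m])) atTop (𝓝 0) := by
  have := hindep.isProbabilityMeasure
  set Y : ℕ → Ω → ℝ := fun m ω => ((m : ℝ) + 1)⁻¹ * (W m ω - μ[W m])
  have hYindep : iIndepFun Y μ :=
    hindep.comp (fun (m : ℕ) (x : ℝ) => ((m : ℝ) + 1)⁻¹ * (x - ∫ ω, W m ω ∂μ)) fun m => by fun_prop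
  have hYmean (m : ℕ) : μ[Y m] = 0 := by
    simp [Y, integral_const_mul, integral_sub ((hL2 m).integrable one_le_two)]
  have hYvar (m : ℕ) : variance (Y m) μ = variance (W m) μ / ((m : ℝ) + 1) ^ 2 := by
    rw [variance_const_mul, variance_sub_const (hL2 m).1, inv_pow, inv_mul_eq_div]
  filter_upwards [ae_exists_tendsto_sum_of_summable_variance hYindep
    (fun m => ((hL2 m).sub (memLp_const _)).const_mul _) hYmean
    (hvar.congr fun m => (hYvar m).symm)] with ω ⟨c, hc⟩
  exact hc.kronecker

end ProbabilityTheory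

theorem posterior_probability_converges_to_one_general
    {Ω : Type*} [MeasurableSpace Ω] (μ : Measure Ω)
    (W : ℕ → Ω → ℝ)
    (hindep : iIndepFun W μ)
    (hL2 : ∀ m, MemLp (W m) 2 μ)
    (ε : ℝ) (hε : 0 < ε)
    (hmean : ∀ m, ∫ ω, W m ω ∂μ ≤ -ε)
    (hvar : Summable fun m : ℕ => variance (W m) μ / ((m : ℝ) + 1) ^ 2)
    (κ₀ : ℝ) :
    ∀ᵐ ω ∂μ, Tendsto
      (fun M => (1 + ((1 - κ₀) / κ₀) * Real.exp (∑ m ∈ Finset.range M, W m ω))⁻¹)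
      atTop (nhds 1) := by
  filter_upwards [ae_tendsto_inv_mul_sum_sub_integral hindep hL2 hvar] with ω hω
  exact tendsto_inv_one_add_mul_exp_of_tendsto_atBot _
    (tendsto_sum_atBot_of_tendsto_inv_mul_sum_sub hε hmean hω)

/-- **Theorem 4: almost sure convergence of the posterior probability of H₀.** Let
`W_1, W_2, …` be independent integrable real random variables with finite variances
(`Memℒp (W m) 2`), such that `E[W_m] ≤ −ε` for all `m` for some `ε > 0`, and
`Σ_m Var(W_m)/m² < ∞`. Let the prior `κ₀ ∈ (0,1)` and define the posterior probability
after `M` studies `κ_{0M} = [1 + ((1−κ₀)/κ₀)·exp(Σ_{m=1}^{M} W_m)]⁻¹`. Then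
`κ_{0M} → 1` almost surely as `M → ∞`. -/
theorem posterior_probability_converges_to_one
    {Ω : Type*} [MeasurableSpace Ω] (μ : Measure Ω) [IsProbabilityMeasure μ]
    (W : ℕ → Ω → ℝ)
    (hindep : iIndepFun W μ)
    (hL2 : ∀ m, MemLp (W m) 2 μ)
    (ε : ℝ) (hε : 0 < ε)
    (hmean : ∀ m, ∫ ω, W m ω ∂μ ≤ -ε)
    (hvar : Summable fun m : ℕ => variance (W m) μ / ((m : ℝ) + 1) ^ 2)
    (κ₀ : ℝ) (hκ₀ : κ₀ ∈ Set.Ioo (0 : ℝ) 1) :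
    ∀ᵐ ω ∂μ, Tendsto
      (fun M => (1 + ((1 - κ₀) / κ₀) * Real.exp (∑ m ∈ Finset.range M, W m ω))⁻¹)
      atTop (nhds 1) :=
  posterior_probability_converges_to_one_general μ W hindep hL2 ε hε hmean hvar κ₀
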